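/- For the backward heat conduction operator A on L²(0,π) with singular values e^{−n²} and eigenfunctions √(2/π) sin(nx): if f ∈ L²(0,π) satisfies Σₙ e^{2n²} |fₙ|² = ∞, where fₙ = √(2/π) ∫₀^π f(τ) sin(nτ) dτ, then for any bases of L²(0,π) generating Petrov–Galerkin projections Pₙ, Qₙ converging strongly to the identity, ‖Aₙ† Qₙ f‖ → ∞, where Aₙ = Qₙ A Pₙ. -/

import Mathlib

noncomputable section
open MeasureTheory Real Set Submodule Filter Topology ContinuousLinearMap
open scoped RealInnerProductSpace

/-- The backward heat kernel `k(x,τ) = (2/π) Σ_{n≥1} e^{-n²} sin(nτ) sin(nx)`. -/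
def heatKernel (x τ : ℝ) : ℝ :=
  (2 / π) * ∑' n : ℕ, Real.exp (-((n : ℝ) + 1) ^ 2) * Real.sin (((n : ℝ) + 1) * τ)
    * Real.sin (((n : ℝ) + 1) * x)

/-- `P` is the orthogonal projection of `E` onto the subspace `K`. -/
def IsOrthProjR {E : Type*} [NormedAddCommGroup E] [InnerProductSpace ℝ E] [CompleteSpace E]
    (P : E →L[ℝ] E) (K : Submodule ℝ E) : Prop :=
  P ∘L P = P ∧ ContinuousLinearMap.adjoint P = P ∧ LinearMap.range (P : E →ₗ[ℝ] E) = K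

/-- `B` is the Moore–Penrose generalized inverse of `T`. -/
def IsMPInvR {E F : Type*} [NormedAddCommGroup E] [InnerProductSpace ℝ E] [CompleteSpace E]
    [NormedAddCommGroup F] [InnerProductSpace ℝ F] [CompleteSpace F]
    (T : E →L[ℝ] F) (B : F →L[ℝ] E) : Prop :=
  T ∘L B ∘L T = T ∧ B ∘L T ∘L B = B ∧
  ContinuousLinearMap.adjoint (T ∘L B) = T ∘L B ∧
  ContinuousLinearMap.adjoint (B ∘L T) = B ∘L T



lemma summable_exp_sq : Summable (fun n : ℕ => Real.exp (-((n:ℝ)+1)^2)) := by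
  have hg : Summable (fun n : ℕ => Real.exp (-((n:ℝ)+1))) := by
    have : Summable (fun n : ℕ => Real.exp (-(n:ℝ)) * Real.exp (-1)) :=
      Real.summable_exp_neg_nat.mul_right _
    exact this.congr (fun n => by rw [← Real.exp_add]; ring_nf)
  exact Summable.of_nonneg_of_le (fun n => (Real.exp_pos _).le)
    (fun n => Real.exp_le_exp.mpr (by nlinarith [Nat.cast_nonneg (α := ℝ) n])) hg

lemma heatKernel_symm (x τ : ℝ) : heatKernel x τ = heatKernel τ x := by
  unfold heatKernel
  congr 1
  exact tsum_congr (fun n => by ring)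

lemma heatKernel_continuous : Continuous (fun p : ℝ × ℝ => heatKernel p.1 p.2) := by
  unfold heatKernel
  apply continuous_const.mul
  apply continuous_tsum
    (u := fun n : ℕ => Real.exp (-((n:ℝ)+1)^2))
    (fun n => by fun_prop) summable_exp_sq
  intro n p
  rw [Real.norm_eq_abs, abs_mul, abs_mul, Real.abs_exp]
  calc Real.exp (-((n:ℝ)+1)^2) * |Real.sin (((n:ℝ)+1) * p.2)| * |Real.sin (((n:ℝ)+1) * p.1)|
      ≤ Real.exp (-((n:ℝ)+1)^2) * 1 * 1 := by
        gcongr <;> exact Real.abs_sin_le_one _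
    _ = _ := by ring

lemma integral_cos_mul' {c : ℝ} (hc : c ≠ 0) :
    ∫ x in (0:ℝ)..π, Real.cos (c * x) = Real.sin (c * π) / c := by
  rw [intervalIntegral.integral_comp_mul_left (fun x => Real.cos x) hc]
  simp [div_eq_inv_mul]

lemma sin_mul_sin_eq (a b x : ℝ) :
    Real.sin (a*x) * Real.sin (b*x)
      = (Real.cos ((a-b)*x) - Real.cos ((a+b)*x)) / 2 := by
  rw [show (a-b)*x = a*x - b*x by ring, show (a+b)*x = a*x + b*x by ring,
    Real.cos_sub, Real.cos_add]
  ring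

lemma sin_orth (n m : ℕ) :
    ∫ x in (0:ℝ)..π, Real.sin (((n:ℝ)+1)*x) * Real.sin (((m:ℝ)+1)*x)
      = if n = m then π/2 else 0 := by
  have h2 : (((n:ℝ)+1) + ((m:ℝ)+1)) ≠ 0 := by positivity
  rcases eq_or_ne n m with rfl | hnm
  · simp only [if_pos rfl]
    rw [intervalIntegral.integral_congr (g := fun x =>
        (Real.cos ((((n:ℝ)+1)-((n:ℝ)+1))*x) - Real.cos (((((n:ℝ)+1))+((n:ℝ)+1))*x)) / 2)
        (fun x _ => sin_mul_sin_eq _ _ x)]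
    simp only [sub_self, zero_mul, Real.cos_zero]
    rw [intervalIntegral.integral_div, intervalIntegral.integral_sub intervalIntegrable_const
      (by apply Continuous.intervalIntegrable; fun_prop)]
    rw [integral_cos_mul' h2]
    have : ((n:ℝ)+1) + ((n:ℝ)+1) = ((2*n+2 : ℕ) : ℝ) := by push_cast; ring
    rw [this, Real.sin_nat_mul_pi]
    simp
  · simp only [if_neg hnm]
    have h1 : (((n:ℝ)+1) - ((m:ℝ)+1)) ≠ 0 := by
      intro h
      apply hnm
      have : (n:ℝ) = m := by linarith [sub_eq_zero.mp h]
      exact_mod_cast this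
    rw [intervalIntegral.integral_congr (g := fun x =>
        (Real.cos ((((n:ℝ)+1)-((m:ℝ)+1))*x) - Real.cos (((((n:ℝ)+1))+((m:ℝ)+1))*x)) / 2)
        (fun x _ => sin_mul_sin_eq _ _ x)]
    rw [intervalIntegral.integral_div, intervalIntegral.integral_sub
      (by apply Continuous.intervalIntegrable; fun_prop)
      (by apply Continuous.intervalIntegrable; fun_prop)]
    rw [integral_cos_mul' h1, integral_cos_mul' h2]
    have e1 : (((n:ℝ)+1) - ((m:ℝ)+1)) = (((n:ℤ) - (m:ℤ) : ℤ) : ℝ) := by push_cast; ring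
    have e2 : (((n:ℝ)+1) + ((m:ℝ)+1)) = (((n:ℤ) + (m:ℤ) + 2 : ℤ) : ℝ) := by push_cast; ring
    rw [e1, e2, Real.sin_int_mul_pi, Real.sin_int_mul_pi]
    simp
-- assume a.lean, b.lean contents; re-state as axioms for speed of iteration



lemma integral_mu_eq (f : ℝ → ℝ) :
    ∫ x in Ioo (0:ℝ) π, f x = ∫ x in (0:ℝ)..π, f x := by
  rw [intervalIntegral.integral_of_le Real.pi_pos.le, MeasureTheory.integral_Ioc_eq_integral_Ioo]

lemma kernel_int (m : ℕ) (x : ℝ) :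
    ∫ τ in Ioo (0:ℝ) π, heatKernel x τ * (Real.sqrt (2/π) * Real.sin (((m:ℝ)+1)*τ))
      = Real.exp (-((m:ℝ)+1)^2) * (Real.sqrt (2/π) * Real.sin (((m:ℝ)+1)*x)) := by
  set c := Real.sqrt (2/π) with hc
  have hc0 : 0 ≤ c := Real.sqrt_nonneg _
  set F : ℕ → ℝ → ℝ := fun n τ =>
    (2/π) * Real.exp (-((n:ℝ)+1)^2) * Real.sin (((n:ℝ)+1)*x) * c *
      (Real.sin (((n:ℝ)+1)*τ) * Real.sin (((m:ℝ)+1)*τ)) with hF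
  have hrw : ∀ τ : ℝ, heatKernel x τ * (c * Real.sin (((m:ℝ)+1)*τ)) = ∑' n, F n τ := by
    intro τ
    calc heatKernel x τ * (c * Real.sin (((m:ℝ)+1)*τ))
        = (∑' n : ℕ, Real.exp (-((n : ℝ) + 1) ^ 2) * Real.sin (((n : ℝ) + 1) * τ)
            * Real.sin (((n : ℝ) + 1) * x)) * ((2/π) * (c * Real.sin (((m:ℝ)+1)*τ))) := by
          unfold heatKernel; ring
      _ = ∑' n : ℕ, (Real.exp (-((n : ℝ) + 1) ^ 2) * Real.sin (((n : ℝ) + 1) * τ)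
            * Real.sin (((n : ℝ) + 1) * x)) * ((2/π) * (c * Real.sin (((m:ℝ)+1)*τ))) :=
          tsum_mul_right.symm
      _ = ∑' n, F n τ := tsum_congr (fun n => by rw [hF]; ring)
  have hFcont : ∀ n, Continuous (F n) := fun n => by rw [hF]; fun_prop
  have hFint : ∀ n, Integrable (F n) (volume.restrict (Ioo (0:ℝ) π)) := fun n =>
    ((hFcont n).integrableOn_Icc).mono_set Ioo_subset_Icc_self
  have hFbd : ∀ n τ, ‖F n τ‖ ≤ (2/π) * Real.exp (-((n:ℝ)+1)^2) * c := by
    intro n τ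
    rw [hF]
    simp only [norm_mul, Real.norm_eq_abs]
    rw [Real.abs_exp, abs_of_nonneg (by positivity : (0:ℝ) ≤ 2/π), abs_of_nonneg hc0]
    calc 2/π * Real.exp (-((n:ℝ)+1)^2) * |Real.sin (((n:ℝ)+1)*x)| * c *
          (|Real.sin (((n:ℝ)+1)*τ)| * |Real.sin (((m:ℝ)+1)*τ)|)
        ≤ 2/π * Real.exp (-((n:ℝ)+1)^2) * 1 * c * (1 * 1) := by
          gcongr <;> exact Real.abs_sin_le_one _
      _ = (2/π) * Real.exp (-((n:ℝ)+1)^2) * c := by ring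
  have hμuniv : ((volume.restrict (Ioo (0:ℝ) π)) Set.univ).toReal = π := by
    rw [Measure.restrict_apply_univ, Real.volume_Ioo, sub_zero, ENNReal.toReal_ofReal Real.pi_pos.le]
  have hFsum : Summable (fun n => ∫ τ, ‖F n τ‖ ∂(volume.restrict (Ioo (0:ℝ) π))) := by
    have hgsum : Summable (fun n : ℕ => ((2/π) * Real.exp (-((n:ℝ)+1)^2) * c) * π) := by
      exact (summable_exp_sq.mul_left ((2/π)*c*π)).congr (fun n => by ring)
    refine Summable.of_nonneg_of_le
      (fun n => integral_nonneg (fun τ => norm_nonneg _)) (fun n => ?_) hgsum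
    calc ∫ τ, ‖F n τ‖ ∂(volume.restrict (Ioo (0:ℝ) π))
        ≤ ∫ _, ((2/π) * Real.exp (-((n:ℝ)+1)^2) * c) ∂(volume.restrict (Ioo (0:ℝ) π)) := by
          apply integral_mono ((hFint n).norm) (integrable_const _)
          intro τ; exact hFbd n τ
      _ = ((2/π) * Real.exp (-((n:ℝ)+1)^2) * c) * π := by
          rw [integral_const, measureReal_def, hμuniv, smul_eq_mul]; ring
  have hswap := integral_tsum_of_summable_integral_norm hFint hFsum
  have hint : ∀ τ ∈ Ioo (0:ℝ) π, True := fun _ _ => trivial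
  calc ∫ τ in Ioo (0:ℝ) π, heatKernel x τ * (c * Real.sin (((m:ℝ)+1)*τ))
      = ∫ τ in Ioo (0:ℝ) π, ∑' n, F n τ := by
        apply integral_congr_ae
        exact Eventually.of_forall (fun τ => hrw τ)
    _ = ∑' n, ∫ τ in Ioo (0:ℝ) π, F n τ := hswap.symm
    _ = ∑' n : ℕ, (2/π) * Real.exp (-((n:ℝ)+1)^2) * Real.sin (((n:ℝ)+1)*x) * c *
          (if n = m then π/2 else 0) := by
        apply tsum_congr; intro n
        rw [hF]
        simp only []
        rw [MeasureTheory.integral_const_mul, integral_mu_eq, sin_orth n m]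
    _ = (2/π) * Real.exp (-((m:ℝ)+1)^2) * Real.sin (((m:ℝ)+1)*x) * c * (π/2) := by
        rw [tsum_eq_single m]
        · simp
        · intro n hnm; simp [hnm]
    _ = Real.exp (-((m:ℝ)+1)^2) * (c * Real.sin (((m:ℝ)+1)*x)) := by
        field_simp




local notation "ν" => volume.restrict (Ioo (0:ℝ) π)

instance : IsFiniteMeasure (volume.restrict (Ioo (0:ℝ) π)) := by
  constructor
  rw [Measure.restrict_apply_univ, Real.volume_Ioo]
  exact ENNReal.ofReal_lt_top

lemma heatKernel_bound (x τ : ℝ) :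
    |heatKernel x τ| ≤ (2/π) * ∑' n : ℕ, Real.exp (-((n:ℝ)+1)^2) := by
  unfold heatKernel
  rw [abs_mul, abs_of_nonneg (by positivity : (0:ℝ) ≤ 2/π)]
  gcongr
  have hb : ∀ n : ℕ, ‖Real.exp (-((n:ℝ)+1)^2) * Real.sin (((n:ℝ)+1)*τ)
      * Real.sin (((n:ℝ)+1)*x)‖ ≤ Real.exp (-((n:ℝ)+1)^2) := by
    intro n
    rw [Real.norm_eq_abs, abs_mul, abs_mul, Real.abs_exp]
    calc Real.exp (-((n:ℝ)+1)^2) * |Real.sin (((n:ℝ)+1)*τ)| * |Real.sin (((n:ℝ)+1)*x)|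
        ≤ Real.exp (-((n:ℝ)+1)^2) * 1 * 1 := by gcongr <;> exact Real.abs_sin_le_one _
      _ = Real.exp (-((n:ℝ)+1)^2) := by ring
  have hsn : Summable (fun n : ℕ => ‖Real.exp (-((n:ℝ)+1)^2) * Real.sin (((n:ℝ)+1)*τ)
      * Real.sin (((n:ℝ)+1)*x)‖) :=
    Summable.of_nonneg_of_le (fun n => norm_nonneg _) hb summable_exp_sq
  calc |∑' n : ℕ, Real.exp (-((n:ℝ)+1)^2) * Real.sin (((n:ℝ)+1)*τ) * Real.sin (((n:ℝ)+1)*x)|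
      ≤ ∑' n : ℕ, ‖Real.exp (-((n:ℝ)+1)^2) * Real.sin (((n:ℝ)+1)*τ) * Real.sin (((n:ℝ)+1)*x)‖ :=
        norm_tsum_le_tsum_norm hsn
    _ ≤ ∑' n : ℕ, Real.exp (-((n:ℝ)+1)^2) := Summable.tsum_le_tsum hb hsn summable_exp_sq

section main
variable (A : Lp ℝ 2 ν →L[ℝ] Lp ℝ 2 ν)
  (hA : ∀ v : Lp ℝ 2 ν, ∀ᵐ x ∂ν, (A v : ℝ → ℝ) x = ∫ τ, heatKernel x τ * (v : ℝ → ℝ) τ ∂ν)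
  (e : ℕ → Lp ℝ 2 ν)
  (he : ∀ n, (e n : ℝ → ℝ) =ᵐ[ν] fun x => Real.sqrt (2 / π) * Real.sin (((n : ℝ) + 1) * x))

include he in
lemma e_orthonormal : Orthonormal ℝ e := by
  rw [orthonormal_iff_ite]
  intro n m
  have : ⟪e n, e m⟫ = ∫ x, (e n : ℝ → ℝ) x * (e m : ℝ → ℝ) x ∂ν := by
    rw [MeasureTheory.L2.inner_def]; simp only [Real.inner_apply]
  rw [this, integral_congr_ae (f := fun x => (e n : ℝ → ℝ) x * (e m : ℝ → ℝ) x)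
    (g := fun x => (Real.sqrt (2/π) * Real.sin (((n:ℝ)+1)*x)) *
      (Real.sqrt (2/π) * Real.sin (((m:ℝ)+1)*x))) (((he n).mul (he m)) :
    (fun x => (e n : ℝ → ℝ) x * (e m : ℝ → ℝ) x) =ᵐ[ν]
      fun x => (Real.sqrt (2/π) * Real.sin (((n:ℝ)+1)*x)) *
        (Real.sqrt (2/π) * Real.sin (((m:ℝ)+1)*x)))]
  have hrw : (fun x => (Real.sqrt (2/π) * Real.sin (((n:ℝ)+1)*x)) *
      (Real.sqrt (2/π) * Real.sin (((m:ℝ)+1)*x)))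
      = fun x => (2/π) * (Real.sin (((n:ℝ)+1)*x) * Real.sin (((m:ℝ)+1)*x)) := by
    funext x
    rw [show (Real.sqrt (2/π) * Real.sin (((n:ℝ)+1)*x)) *
        (Real.sqrt (2/π) * Real.sin (((m:ℝ)+1)*x))
        = (Real.sqrt (2/π) * Real.sqrt (2/π)) *
          (Real.sin (((n:ℝ)+1)*x) * Real.sin (((m:ℝ)+1)*x)) from by ring,
      Real.mul_self_sqrt (by positivity)]
  rw [hrw, MeasureTheory.integral_const_mul, integral_mu_eq, sin_orth n m]
  rcases eq_or_ne n m with rfl | hnm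
  · simp [div_mul_div_comm]
  · simp [hnm]

include hA he in
lemma hAe (m : ℕ) : A (e m) = Real.exp (-((m:ℝ)+1)^2) • e m := by
  apply MeasureTheory.Lp.ext
  have h1 := hA (e m)
  have h2 : ∀ x : ℝ, (∫ τ, heatKernel x τ * (e m : ℝ → ℝ) τ ∂ν)
      = Real.exp (-((m:ℝ)+1)^2) * (Real.sqrt (2/π) * Real.sin (((m:ℝ)+1)*x)) := by
    intro x
    have hcongr : (fun τ => heatKernel x τ * (e m : ℝ → ℝ) τ) =ᵐ[ν]
        (fun τ => heatKernel x τ * (Real.sqrt (2/π) * Real.sin (((m:ℝ)+1)*τ))) :=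
      (he m).mono (fun τ hτ => by dsimp only; rw [hτ])
    rw [integral_congr_ae hcongr]
    exact kernel_int m x
  have h3 := Lp.coeFn_smul (Real.exp (-((m:ℝ)+1)^2)) (e m)
  filter_upwards [h1, h3, he m] with x hx1 hx3 hxe
  rw [hx1, h2 x, hx3]
  simp only [Pi.smul_apply, smul_eq_mul, hxe]

include hA he in
lemma hAadj (m : ℕ) :
    (ContinuousLinearMap.adjoint A) (e m) = Real.exp (-((m:ℝ)+1)^2) • e m := by
  set c := Real.sqrt (2/π) with hc
  apply ext_inner_right ℝ
  intro y
  rw [ContinuousLinearMap.adjoint_inner_left, real_inner_smul_left]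
  have hyInt : Integrable (y : ℝ → ℝ) ν :=
    (Lp.memLp y).integrable (by norm_num)
  have hKb : (0:ℝ) ≤ (2/π) * ∑' n : ℕ, Real.exp (-((n:ℝ)+1)^2) := by
    have := tsum_nonneg (L := SummationFilter.unconditional ℕ) (fun n : ℕ => (Real.exp_pos (-((n:ℝ)+1)^2)).le)
    positivity
  set KB := (2/π) * ∑' n : ℕ, Real.exp (-((n:ℝ)+1)^2) with hKB
  -- step 1: the inner product as a double integral
  have step1 : ⟪e m, A y⟫ = ∫ x, ∫ τ,
      (c * Real.sin (((m:ℝ)+1)*x)) * (heatKernel x τ * (y : ℝ → ℝ) τ) ∂ν ∂ν := by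
    rw [MeasureTheory.L2.inner_def]
    apply integral_congr_ae
    filter_upwards [he m, hA y] with x hxe hxA
    rw [show (inner ℝ ((e m : ℝ → ℝ) x) ((A y : ℝ → ℝ) x) : ℝ)
      = (e m : ℝ → ℝ) x * (A y : ℝ → ℝ) x from Real.inner_apply _ _, hxe, hxA,
      ← MeasureTheory.integral_const_mul]
  -- step 2: Fubini
  have hG : Integrable (Function.uncurry (fun x τ =>
      (c * Real.sin (((m:ℝ)+1)*x)) * (heatKernel x τ * (y : ℝ → ℝ) τ))) ((volume.restrict (Ioo (0:ℝ) π)).prod (volume.restrict (Ioo (0:ℝ) π))) := by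
    have hmeas : AEStronglyMeasurable (Function.uncurry (fun x τ =>
        (c * Real.sin (((m:ℝ)+1)*x)) * (heatKernel x τ * (y : ℝ → ℝ) τ))) ((volume.restrict (Ioo (0:ℝ) π)).prod (volume.restrict (Ioo (0:ℝ) π))) := by
      have h1 : AEStronglyMeasurable (fun p : ℝ × ℝ =>
          c * Real.sin (((m:ℝ)+1)*p.1) * heatKernel p.1 p.2)
          ((volume.restrict (Ioo (0:ℝ) π)).prod (volume.restrict (Ioo (0:ℝ) π))) :=
        (Continuous.mul (by fun_prop) heatKernel_continuous).aestronglyMeasurable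
      have h2 := AEStronglyMeasurable.comp_snd (μ := volume.restrict (Ioo (0:ℝ) π))
        (Lp.aestronglyMeasurable y)
      exact (h1.mul h2).congr (Eventually.of_forall (by rintro ⟨x, τ⟩
                                                        simp [Function.uncurry]
                                                        ring))
    apply Integrable.mono' ((integrable_const (c * KB)).mul_prod hyInt.norm) hmeas
    apply Eventually.of_forall
    rintro ⟨x, τ⟩
    simp only [Function.uncurry_apply_pair, Real.norm_eq_abs, abs_mul,
      abs_of_nonneg (show (0:ℝ) ≤ c from Real.sqrt_nonneg _)]
    have hKbd : |heatKernel x τ| ≤ KB := by rw [hKB]; exact heatKernel_bound x τ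
    calc c * |Real.sin (((m:ℝ)+1)*x)| * (|heatKernel x τ| * |(y : ℝ → ℝ) τ|)
        ≤ c * 1 * (KB * |(y : ℝ → ℝ) τ|) := by
          gcongr <;> first
            | exact Real.sqrt_nonneg _
            | exact Real.abs_sin_le_one _
            | exact hKbd
            | positivity
      _ = c * KB * |(y : ℝ → ℝ) τ| := by ring
  have step2 : (∫ x, ∫ τ,
        (c * Real.sin (((m:ℝ)+1)*x)) * (heatKernel x τ * (y : ℝ → ℝ) τ) ∂ν ∂ν)
      = ∫ τ, ∫ x,
        (c * Real.sin (((m:ℝ)+1)*x)) * (heatKernel x τ * (y : ℝ → ℝ) τ) ∂ν ∂ν :=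
    MeasureTheory.integral_integral_swap hG
  -- step 3: inner integral evaluation
  have step3 : ∀ τ : ℝ, (∫ x,
        (c * Real.sin (((m:ℝ)+1)*x)) * (heatKernel x τ * (y : ℝ → ℝ) τ) ∂ν)
      = (Real.exp (-((m:ℝ)+1)^2) * (c * Real.sin (((m:ℝ)+1)*τ))) * (y : ℝ → ℝ) τ := by
    intro τ
    have : ∀ x : ℝ, (c * Real.sin (((m:ℝ)+1)*x)) * (heatKernel x τ * (y : ℝ → ℝ) τ)
        = (heatKernel τ x * (c * Real.sin (((m:ℝ)+1)*x))) * (y : ℝ → ℝ) τ := by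
      intro x; rw [heatKernel_symm τ x]; ring
    simp only [this]
    rw [MeasureTheory.integral_mul_const, kernel_int m τ]
  -- assemble
  rw [step1, step2]
  have step4 : (∫ τ, ∫ x,
        (c * Real.sin (((m:ℝ)+1)*x)) * (heatKernel x τ * (y : ℝ → ℝ) τ) ∂ν ∂ν)
      = Real.exp (-((m:ℝ)+1)^2) * ∫ τ, (c * Real.sin (((m:ℝ)+1)*τ)) * (y : ℝ → ℝ) τ ∂ν := by
    rw [← MeasureTheory.integral_const_mul]
    apply integral_congr_ae
    apply Eventually.of_forall
    intro τ
    dsimp only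
    rw [step3 τ]
    ring
  rw [step4]
  congr 1
  rw [MeasureTheory.L2.inner_def]
  apply integral_congr_ae
  filter_upwards [he m] with τ hτe
  rw [show (inner ℝ ((e m : ℝ → ℝ) τ) ((y : ℝ → ℝ) τ) : ℝ)
    = (e m : ℝ → ℝ) τ * (y : ℝ → ℝ) τ from Real.inner_apply _ _, hτe]

end main







section abstract
variable {E : Type*} [NormedAddCommGroup E] [InnerProductSpace ℝ E] [CompleteSpace E]

lemma proj_norm_apply_le {P : E →L[ℝ] E}
    (hproj : P ∘L P = P) (hadj : ContinuousLinearMap.adjoint P = P) (x : E) :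
    ‖P x‖ ≤ ‖x‖ := by
  have hPP : P (P x) = P x := by
    have := congrArg (fun (T : E →L[ℝ] E) => T x) hproj
    simpa using this
  have h1 : ⟪P x, P x⟫ = ⟪x, P x⟫ := by
    have h := ContinuousLinearMap.adjoint_inner_left P (P x) x
    rw [hadj, hPP] at h
    exact h
  have h2 : ‖P x‖ ^ 2 ≤ ‖x‖ * ‖P x‖ := by
    rw [← real_inner_self_eq_norm_sq, h1]
    exact real_inner_le_norm x (P x)
  rcases eq_or_lt_of_le (norm_nonneg (P x)) with h0 | h0
  · rw [← h0]; exact norm_nonneg x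
  · nlinarith

omit [CompleteSpace E] in
lemma proj_comp_tendsto {Q : ℕ → E →L[ℝ] E} (hQle : ∀ n x, ‖Q n x‖ ≤ ‖x‖)
    (hQconv : ∀ y, Tendsto (fun n => Q n y) atTop (𝓝 y))
    {x : ℕ → E} {a : E} (hx : Tendsto x atTop (𝓝 a)) :
    Tendsto (fun n => Q n (x n)) atTop (𝓝 a) := by
  rw [tendsto_iff_norm_sub_tendsto_zero]
  apply squeeze_zero (fun n => norm_nonneg _)
    (g := fun n => ‖x n - a‖ + ‖Q n a - a‖)
  · intro n
    calc ‖Q n (x n) - a‖ = ‖Q n (x n - a) + (Q n a - a)‖ := by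
          congr 1
          rw [map_sub]
          abel
      _ ≤ ‖Q n (x n - a)‖ + ‖Q n a - a‖ := norm_add_le _ _
      _ ≤ ‖x n - a‖ + ‖Q n a - a‖ := by gcongr; exact hQle n _
  · have h1 : Tendsto (fun n => ‖x n - a‖) atTop (𝓝 0) :=
      tendsto_iff_norm_sub_tendsto_zero.mp hx
    have h2 : Tendsto (fun n => ‖Q n a - a‖) atTop (𝓝 0) :=
      tendsto_iff_norm_sub_tendsto_zero.mp (hQconv a)
    simpa using h1.add h2

theorem abstract_main
    (A : E →L[ℝ] E) (e : ℕ → E)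
    (he_on : Orthonormal ℝ e)
    (hAe : ∀ m : ℕ, A (e m) = Real.exp (-((m:ℝ)+1)^2) • e m)
    (hAadj : ∀ m : ℕ,
      (ContinuousLinearMap.adjoint A) (e m) = Real.exp (-((m:ℝ)+1)^2) • e m)
    (P Q : ℕ → E →L[ℝ] E)
    (hPproj : ∀ n, P n ∘L P n = P n)
    (hPadj : ∀ n, ContinuousLinearMap.adjoint (P n) = P n)
    (hQproj : ∀ n, Q n ∘L Q n = Q n)
    (hQadj : ∀ n, ContinuousLinearMap.adjoint (Q n) = Q n)
    (hPconv : ∀ x, Filter.Tendsto (fun n => P n x) atTop (nhds x))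
    (hQconv : ∀ y, Filter.Tendsto (fun n => Q n y) atTop (nhds y))
    (An : ℕ → E →L[ℝ] E) (hAn : ∀ n, An n = Q n ∘L A ∘L P n)
    (B : ℕ → E →L[ℝ] E) (hB : ∀ n, IsMPInvR (An n) (B n))
    (f : E)
    (hf : ¬ Summable (fun n : ℕ => Real.exp (2 * ((n : ℝ) + 1) ^ 2) * ⟪e n, f⟫ ^ 2)) :
    Filter.Tendsto (fun n => ‖B n (Q n f)‖) atTop atTop := by
  by_contra hcon
  rw [tendsto_atTop] at hcon
  push_neg at hcon
  obtain ⟨C, hC⟩ := hcon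
  obtain ⟨φ, hφmono, hφ⟩ := Filter.extraction_of_frequently_atTop hC
  have hCle : ∀ k, ‖B (φ k) (Q (φ k) f)‖ ≤ C := fun k => (hφ k).le
  have hPle : ∀ n x, ‖P n x‖ ≤ ‖x‖ := fun n x => proj_norm_apply_le (hPproj n) (hPadj n) x
  have hQle : ∀ n x, ‖Q n x‖ ≤ ‖x‖ := fun n x => proj_norm_apply_le (hQproj n) (hQadj n) x
  have hAnv : ∀ v : E, Tendsto (fun n => An n v) atTop (𝓝 (A v)) := by
    intro v
    have h1 : Tendsto (fun n => A (P n v)) atTop (𝓝 (A v)) :=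
      (A.continuous.tendsto v).comp (hPconv v)
    have h2 := proj_comp_tendsto hQle hQconv h1
    refine h2.congr (fun n => ?_)
    rw [hAn n]
    rfl
  have hAnadj : ∀ n, ContinuousLinearMap.adjoint (An n) =
      P n ∘L ContinuousLinearMap.adjoint A ∘L Q n := by
    intro n
    rw [hAn n, ContinuousLinearMap.adjoint_comp, ContinuousLinearMap.adjoint_comp,
      hPadj n, hQadj n]
    rfl
  have hAnAnv : ∀ v : E,
      Tendsto (fun n => ContinuousLinearMap.adjoint (An n) (An n v)) atTop
        (𝓝 (ContinuousLinearMap.adjoint A (A v))) := by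
    intro v
    have h1 : Tendsto (fun n => A (P n v)) atTop (𝓝 (A v)) :=
      (A.continuous.tendsto v).comp (hPconv v)
    have h2 := proj_comp_tendsto hQle hQconv h1
    have h3 : Tendsto (fun n => ContinuousLinearMap.adjoint A (Q n (A (P n v)))) atTop
        (𝓝 (ContinuousLinearMap.adjoint A (A v))) :=
      ((ContinuousLinearMap.adjoint A).continuous.tendsto _).comp h2
    have h4 := proj_comp_tendsto hPle hPconv h3
    refine h4.congr (fun n => ?_)
    have hQQ : ∀ z, Q n (Q n z) = Q n z := fun z => by
      have hz := congrArg (fun (T : E →L[ℝ] E) => T z) (hQproj n)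
      simpa using hz
    rw [hAnadj n, hAn n]
    simp only [ContinuousLinearMap.comp_apply]
    rw [hQQ]
  have hkey : ∀ v : E, |⟪f, A v⟫| ≤ C * ‖ContinuousLinearMap.adjoint A (A v)‖ := by
    intro v
    have hid : ∀ n, ⟪Q n f, An n v⟫
        = ⟪B n (Q n f), ContinuousLinearMap.adjoint (An n) (An n v)⟫ := by
      intro n
      have hE : ContinuousLinearMap.adjoint (An n ∘L B n) = An n ∘L B n := (hB n).2.2.1
      have hEA : (An n ∘L B n) (An n v) = An n v := by
        have hz := congrArg (fun (T : E →L[ℝ] E) => T v) (hB n).1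
        simpa using hz
      calc ⟪Q n f, An n v⟫ = ⟪Q n f, (An n ∘L B n) (An n v)⟫ := by rw [hEA]
        _ = ⟪ContinuousLinearMap.adjoint (An n ∘L B n) (Q n f), An n v⟫ :=
            (ContinuousLinearMap.adjoint_inner_left _ _ _).symm
        _ = ⟪(An n ∘L B n) (Q n f), An n v⟫ := by rw [hE]
        _ = ⟪An n (B n (Q n f)), An n v⟫ := rfl
        _ = ⟪B n (Q n f), ContinuousLinearMap.adjoint (An n) (An n v)⟫ := by
            rw [ContinuousLinearMap.adjoint_inner_right]
    have hfreq : ∀ k, |⟪Q (φ k) f, An (φ k) v⟫|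
        ≤ C * ‖ContinuousLinearMap.adjoint (An (φ k)) (An (φ k) v)‖ := by
      intro k
      rw [hid (φ k)]
      calc |⟪B (φ k) (Q (φ k) f), ContinuousLinearMap.adjoint (An (φ k)) (An (φ k) v)⟫|
          ≤ ‖B (φ k) (Q (φ k) f)‖ * ‖ContinuousLinearMap.adjoint (An (φ k)) (An (φ k) v)‖ :=
            abs_real_inner_le_norm _ _
        _ ≤ C * ‖ContinuousLinearMap.adjoint (An (φ k)) (An (φ k) v)‖ := by
            gcongr
            exact hCle k
    have hL : Tendsto (fun k => |⟪Q (φ k) f, An (φ k) v⟫|) atTop (𝓝 |⟪f, A v⟫|) := by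
      have := (Filter.Tendsto.inner (𝕜 := ℝ) (hQconv f) (hAnv v)).comp hφmono.tendsto_atTop
      exact this.abs
    have hR : Tendsto (fun k => C * ‖ContinuousLinearMap.adjoint (An (φ k)) (An (φ k) v)‖)
        atTop (𝓝 (C * ‖ContinuousLinearMap.adjoint A (A v)‖)) := by
      have := ((hAnAnv v).comp hφmono.tendsto_atTop).norm
      exact this.const_mul C
    exact le_of_tendsto_of_tendsto' hL hR hfreq
  set g : ℕ → ℝ := fun m => Real.exp (2 * ((m:ℝ)+1)^2) * ⟪e m, f⟫ ^ 2 with hg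
  have hg0 : ∀ m, 0 ≤ g m := fun m => mul_nonneg (Real.exp_pos _).le (sq_nonneg _)
  apply hf
  apply summable_of_sum_range_le (c := C^2) hg0
  intro N
  set v : E := ∑ m ∈ Finset.range N,
    (Real.exp (3 * ((m:ℝ)+1)^2) * ⟪e m, f⟫) • e m with hv
  have hAv : A v = ∑ m ∈ Finset.range N,
      (Real.exp (2 * ((m:ℝ)+1)^2) * ⟪e m, f⟫) • e m := by
    rw [hv, map_sum]
    apply Finset.sum_congr rfl
    intro m _
    rw [ContinuousLinearMap.map_smul, hAe m, smul_smul]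
    congr 1
    have hexp : Real.exp (3 * ((m:ℝ)+1)^2) * Real.exp (-((m:ℝ)+1)^2)
        = Real.exp (2 * ((m:ℝ)+1)^2) := by
      rw [← Real.exp_add]; congr 1; ring
    rw [← hexp]; ring
  have hAAv : ContinuousLinearMap.adjoint A (A v) = ∑ m ∈ Finset.range N,
      (Real.exp (((m:ℝ)+1)^2) * ⟪e m, f⟫) • e m := by
    rw [hAv, map_sum]
    apply Finset.sum_congr rfl
    intro m _
    rw [ContinuousLinearMap.map_smul, hAadj m, smul_smul]
    congr 1
    have hexp : Real.exp (2 * ((m:ℝ)+1)^2) * Real.exp (-((m:ℝ)+1)^2)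
        = Real.exp (((m:ℝ)+1)^2) := by
      rw [← Real.exp_add]; congr 1; ring
    rw [← hexp]; ring
  set S : ℝ := ∑ m ∈ Finset.range N, g m with hS
  have hS0 : 0 ≤ S := Finset.sum_nonneg (fun m _ => hg0 m)
  have hfAv : ⟪f, A v⟫ = S := by
    rw [hAv, inner_sum, hS]
    apply Finset.sum_congr rfl
    intro m _
    rw [real_inner_smul_right, hg]
    have hcomm : ⟪f, e m⟫ = ⟪e m, f⟫ := real_inner_comm _ _
    rw [hcomm]
    ring
  have hnorm : ‖ContinuousLinearMap.adjoint A (A v)‖ = Real.sqrt S := by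
    have h2 : ‖ContinuousLinearMap.adjoint A (A v)‖ ^ 2 = S := by
      rw [← real_inner_self_eq_norm_sq, hAAv,
        he_on.inner_sum (fun m => Real.exp (((m:ℝ)+1)^2) * ⟪e m, f⟫)
          (fun m => Real.exp (((m:ℝ)+1)^2) * ⟪e m, f⟫) (Finset.range N), hS]
      apply Finset.sum_congr rfl
      intro m _
      simp only [starRingEnd_apply, star_trivial]
      have hexp : Real.exp (((m:ℝ)+1)^2) * Real.exp (((m:ℝ)+1)^2)
          = Real.exp (2*((m:ℝ)+1)^2) := by
        rw [← Real.exp_add]; congr 1; ring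
      rw [hg]
      dsimp only
      rw [← hexp]; ring
    rw [← h2, Real.sqrt_sq (norm_nonneg _)]
  have hineq := hkey v
  rw [hfAv, hnorm, abs_of_nonneg hS0] at hineq
  nlinarith [Real.sq_sqrt hS0, Real.sqrt_nonneg S]

end abstract

/-- for the backward heat conduction operator `A` on `L²(0,π)`, if
`Σₙ e^{2n²} |fₙ|² = ∞` with `fₙ = ⟨f, √(2/π) sin(n·)⟩`, then for any Petrov–Galerkin scheme with
projections converging strongly to the identity, `‖Aₙ† Qₙ f‖ → ∞`. -/
theorem stmt18
    (μ : Measure ℝ) (hμ : μ = volume.restrict (Set.Ioo (0:ℝ) π))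
    (A : Lp ℝ 2 μ →L[ℝ] Lp ℝ 2 μ)
    (hA : ∀ v : Lp ℝ 2 μ, ∀ᵐ x ∂μ, (A v : ℝ → ℝ) x = ∫ τ, heatKernel x τ * (v : ℝ → ℝ) τ ∂μ)
    (e : ℕ → Lp ℝ 2 μ)
    (he : ∀ n, (e n : ℝ → ℝ) =ᵐ[μ] fun x => Real.sqrt (2 / π) * Real.sin (((n : ℝ) + 1) * x))
    (ξ η : ℕ → Lp ℝ 2 μ)
    (P Q : ℕ → Lp ℝ 2 μ →L[ℝ] Lp ℝ 2 μ)
    (hP : ∀ n, IsOrthProjR (P n) (span ℝ (ξ '' Set.Iio n)))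
    (hQ : ∀ n, IsOrthProjR (Q n) (span ℝ (η '' Set.Iio n)))
    (hPconv : ∀ x, Filter.Tendsto (fun n => P n x) atTop (nhds x))
    (hQconv : ∀ y, Filter.Tendsto (fun n => Q n y) atTop (nhds y))
    (An : ℕ → Lp ℝ 2 μ →L[ℝ] Lp ℝ 2 μ) (hAn : ∀ n, An n = Q n ∘L A ∘L P n)
    (B : ℕ → Lp ℝ 2 μ →L[ℝ] Lp ℝ 2 μ) (hB : ∀ n, IsMPInvR (An n) (B n))
    (f : Lp ℝ 2 μ)
    (hf : ¬ Summable (fun n : ℕ => Real.exp (2 * ((n : ℝ) + 1) ^ 2) * ⟪e n, f⟫ ^ 2)) :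
    Filter.Tendsto (fun n => ‖B n (Q n f)‖) atTop atTop := by
  subst hμ
  exact abstract_main A e (e_orthonormal e he) (hAe A hA e he) (hAadj A hA e he)
    P Q (fun n => (hP n).1) (fun n => (hP n).2.1) (fun n => (hQ n).1) (fun n => (hQ n).2.1)
    hPconv hQconv An hAn B hB f hf
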